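/- arXiv:1101.3129 — 2 statements merged into one kernel-verified Lean document; each statement's English description precedes it below -/
import Mathlib

section
/- The Loss-Yau spinor ψ(x) = (1+|x|²)^{-3/2}(I + i x·σ)(1,0)ᵀ satisfies the first-order equation (σ·p)ψ(x) = 3(1+|x|²)^{-1} ψ(x), where σ·p = -i Σⱼ σⱼ ∂/∂xⱼ. -/
open MeasureTheory Real
open scoped ENNReal

noncomputable section

def pauli : Fin 3 → Matrix (Fin 2) (Fin 2) ℂ :=
  ![!![0, 1; 1, 0], !![0, -Complex.I; Complex.I, 0], !![1, 0; 0, -1]]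

abbrev V3 := EuclideanSpace ℝ (Fin 3)
abbrev C2 := EuclideanSpace ℂ (Fin 2)

def sigmaP (f : V3 → C2) (x : V3) : C2 :=
  (WithLp.equiv 2 (Fin 2 → ℂ)).symm
    (-Complex.I • ∑ j : Fin 3, (pauli j).mulVec
      (WithLp.equiv 2 (Fin 2 → ℂ) (fderiv ℝ f x (EuclideanSpace.single j 1))))

def psiLY (x : V3) : C2 :=
  (WithLp.equiv 2 (Fin 2 → ℂ)).symm
    ((((1 + ‖x‖^2) ^ (-(3:ℝ)/2) : ℝ) : ℂ) •
      ((1 : Matrix (Fin 2) (Fin 2) ℂ) +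
        Complex.I • ∑ j : Fin 3, ((x j : ℝ) : ℂ) • pauli j).mulVec ![1, 0])

/-! Write `ψ = ρ • g` with `ρ x = (1 + ‖x‖²)^(-3/2)` and `g x = (1 + i σ·x) e` for a constant
spinor `e`. The Leibniz rule gives `(σ·p)(ρ g) = ρ (σ·p) g - i (σ·∇ρ) g`. Since `g` is affine with
`∂ⱼ g = i σⱼ e` and `σⱼ² = 1`, `(σ·p) g = 3 e`; since `∇ρ = -3 (1 + ‖x‖²)^(-5/2) x` and
`(σ·x)² = ‖x‖²`, the second term is `3 (1 + ‖x‖²)^(-5/2) (i σ·x - ‖x‖²) e`. The `‖x‖²` terms cancel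
against `ρ · 3 e = 3 (1 + ‖x‖²)^(-5/2) (1 + ‖x‖²) e`, leaving `3 (1 + ‖x‖²)^(-5/2) g`,
which is `3 (1 + ‖x‖²)⁻¹ ψ`. Nothing depends on the choice `e = (1, 0)`. -/

open scoped Matrix

theorem pauli_mul_self (j : Fin 3) : pauli j * pauli j = 1 := by
  fin_cases j <;> ext a b <;> fin_cases a <;> fin_cases b <;> simp [pauli, Matrix.mul_apply]

def sigmaDot (v : V3) : Matrix (Fin 2) (Fin 2) ℂ := ∑ j : Fin 3, ((v j : ℝ) : ℂ) • pauli j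

theorem sigmaDot_add (v w : V3) : sigmaDot (v + w) = sigmaDot v + sigmaDot w := by
  simp only [sigmaDot, PiLp.add_apply, Complex.ofReal_add, add_smul, Finset.sum_add_distrib]

theorem sigmaDot_smul (c : ℝ) (v : V3) : sigmaDot (c • v) = (c : ℂ) • sigmaDot v := by
  simp only [sigmaDot, Finset.smul_sum, smul_smul, PiLp.smul_apply, smul_eq_mul,
    Complex.ofReal_mul]

theorem sigmaDot_single (k : Fin 3) : sigmaDot (EuclideanSpace.single k 1) = pauli k := by
  simp [sigmaDot, PiLp.single_apply]

theorem sum_inner_single_smul_pauli (v : V3) :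
    ∑ j : Fin 3, inner ℝ v (EuclideanSpace.single j (1 : ℝ)) • pauli j = sigmaDot v := by
  simp [sigmaDot, EuclideanSpace.inner_single_right, Complex.coe_smul]

theorem sigmaDot_mul_self (v : V3) : sigmaDot v * sigmaDot v = ((‖v‖ ^ 2 : ℝ) : ℂ) • 1 := by
  rw [EuclideanSpace.norm_eq, Real.sq_sqrt (by positivity)]
  ext a b
  fin_cases a <;> fin_cases b <;>
    simp [sigmaDot, pauli, Fin.sum_univ_three, Matrix.mul_apply, Fin.sum_univ_two] <;>
    ring_nf <;> simp only [Complex.I_sq] <;> ring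

def sigmaDotMulVecCLM (c : Fin 2 → ℂ) : V3 →L[ℝ] C2 :=
  LinearMap.toContinuousLinearMap
    { toFun := fun v => WithLp.toLp 2 (sigmaDot v *ᵥ c)
      map_add' := fun v w => by simp only [sigmaDot_add, Matrix.add_mulVec, WithLp.toLp_add]
      map_smul' := fun r v => by
        simp only [sigmaDot_smul, Matrix.smul_mulVec, WithLp.toLp_smul, Complex.coe_smul,
          RingHom.id_apply] }

theorem sigmaDotMulVecCLM_apply (c : Fin 2 → ℂ) (v : V3) :
    sigmaDotMulVecCLM c v = WithLp.toLp 2 (sigmaDot v *ᵥ c) := rfl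

theorem sigmaP_smul {ρ : V3 → ℝ} {f : V3 → C2} {v x : V3} {f' : V3 →L[ℝ] C2}
    (hρ : HasFDerivAt ρ (innerSL ℝ v) x) (hf : HasFDerivAt f f' x) :
    sigmaP (fun y => ρ y • f y) x =
      ρ x • sigmaP f x - Complex.I • WithLp.toLp 2 (sigmaDot v *ᵥ WithLp.ofLp (f x)) := by
  have hρf : fderiv ℝ (fun y => ρ y • f y) x = ρ x • f' + (innerSL ℝ v).smulRight (f x) :=
    (hρ.smul hf).fderiv
  simp only [sigmaP, hρf, hf.fderiv, ← sum_inner_single_smul_pauli, WithLp.equiv_apply,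
    WithLp.equiv_symm_apply, add_apply, smul_apply, ContinuousLinearMap.smulRight_apply,
    innerSL_apply_apply, WithLp.ofLp_add, WithLp.ofLp_smul, Matrix.mulVec_add, Matrix.mulVec_smul,
    Finset.sum_add_distrib, Matrix.sum_mulVec, Matrix.smul_mulVec]
  rw [← Finset.smul_sum]
  simp only [smul_add, WithLp.toLp_add, WithLp.toLp_smul]
  module

theorem hasFDerivAt_one_add_I_sigmaDot_mulVec (c : Fin 2 → ℂ) (x : V3) :
    HasFDerivAt (fun y => WithLp.toLp 2 ((1 + Complex.I • sigmaDot y) *ᵥ c))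
      (Complex.I • sigmaDotMulVecCLM c) x := by
  have hfun : (fun y : V3 => WithLp.toLp 2 ((1 + Complex.I • sigmaDot y) *ᵥ c)) =
      fun y => WithLp.toLp 2 c + Complex.I • sigmaDotMulVecCLM c y := by
    ext1 y
    simp only [Matrix.add_mulVec, Matrix.one_mulVec, Matrix.smul_mulVec, WithLp.toLp_add,
      WithLp.toLp_smul, sigmaDotMulVecCLM_apply]
  rw [hfun]
  exact ((sigmaDotMulVecCLM c).hasFDerivAt.const_smul Complex.I).const_add _

theorem sigmaP_one_add_I_sigmaDot_mulVec (c : Fin 2 → ℂ) (x : V3) :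
    sigmaP (fun y => WithLp.toLp 2 ((1 + Complex.I • sigmaDot y) *ᵥ c)) x =
      (3 : ℂ) • WithLp.toLp 2 c := by
  simp only [sigmaP, (hasFDerivAt_one_add_I_sigmaDot_mulVec c x).fderiv, smul_apply,
    sigmaDotMulVecCLM_apply, sigmaDot_single, WithLp.equiv_apply, WithLp.equiv_symm_apply,
    WithLp.ofLp_smul, Matrix.mulVec_smul, Matrix.mulVec_mulVec, pauli_mul_self,
    Matrix.one_mulVec, Finset.sum_const, Finset.card_univ, Fintype.card_fin, WithLp.toLp_smul]
  match_scalars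
  linear_combination (-3 : ℂ) * Complex.I_mul_I

theorem hasFDerivAt_one_add_norm_sq_rpow {E : Type*} [NormedAddCommGroup E]
    [InnerProductSpace ℝ E] (p : ℝ) (x : E) :
    HasFDerivAt (fun y => (1 + ‖y‖ ^ 2) ^ p)
      (innerSL ℝ ((2 * p * (1 + ‖x‖ ^ 2) ^ (p - 1)) • x)) x := by
  have hpow := Real.hasDerivAt_rpow_const (p := p) (Or.inl (by positivity : 1 + ‖x‖ ^ 2 ≠ 0))
  refine (hpow.comp_hasFDerivAt x (((hasFDerivAt_id x).norm_sq).const_add 1)).congr_fderiv ?_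
  ext v
  simp only [id_eq, ContinuousLinearMap.comp_id, smul_apply, coe_innerSL_apply, nsmul_eq_mul,
    Nat.cast_ofNat, smul_eq_mul, map_smul]
  ring

def lossYauSpinor (c : Fin 2 → ℂ) (y : V3) : C2 :=
  (1 + ‖y‖ ^ 2) ^ (-(3 : ℝ) / 2) • WithLp.toLp 2 ((1 + Complex.I • sigmaDot y) *ᵥ c)

theorem sigmaP_lossYauSpinor (c : Fin 2 → ℂ) (x : V3) :
    sigmaP (lossYauSpinor c) x = (3 / (1 + ‖x‖ ^ 2)) • lossYauSpinor c x := by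
  unfold lossYauSpinor
  rw [sigmaP_smul (hasFDerivAt_one_add_norm_sq_rpow _ x)
    (hasFDerivAt_one_add_I_sigmaDot_mulVec c x), sigmaP_one_add_I_sigmaDot_mulVec]
  simp only [sigmaDot_smul, Matrix.add_mulVec, Matrix.one_mulVec, Matrix.smul_mulVec,
    Matrix.mulVec_add, Matrix.mulVec_smul, Matrix.mulVec_mulVec,
    Matrix.smul_mul, sigmaDot_mul_self, WithLp.toLp_add, WithLp.toLp_smul]
  have ht : 0 < 1 + ‖x‖ ^ 2 := by positivity
  have hρ : (1 + ‖x‖ ^ 2) ^ (-3 / 2 : ℝ) = (1 + ‖x‖ ^ 2) * (1 + ‖x‖ ^ 2) ^ (-5 / 2 : ℝ) := by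
    rw [← Real.rpow_one_add' ht.le (by norm_num)]; norm_num
  have hk : 2 * (-3 / 2) * (1 + ‖x‖ ^ 2) ^ (-3 / 2 - 1 : ℝ) =
      -3 * (1 + ‖x‖ ^ 2) ^ (-5 / 2 : ℝ) := by
    norm_num
  rw [hk, hρ, smul_smul (3 / (1 + ‖x‖ ^ 2)), ← mul_assoc, div_mul_cancel₀ _ ht.ne']
  generalize (1 + ‖x‖ ^ 2) ^ (-5 / 2 : ℝ) = s
  match_scalars <;> simp only [Algebra.cast, Complex.coe_algebraMap]
  · linear_combination (3 * (s : ℂ) * (‖x‖ : ℂ) ^ 2) * Complex.I_mul_I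
  · ring

theorem psiLY_eq_lossYauSpinor : psiLY = lossYauSpinor ![1, 0] := by
  ext1 y
  simp only [psiLY, lossYauSpinor, sigmaDot, WithLp.equiv_symm_apply, WithLp.toLp_smul,
    Complex.coe_smul]

theorem loss_yau_equation :
    ∀ x : V3, sigmaP psiLY x = ((3 / (1 + ‖x‖ ^ 2) : ℝ)) • psiLY x := by
  rw [psiLY_eq_lossYauSpinor]
  exact sigmaP_lossYauSpinor _

end
end

section
/- Weak Hölder inequality: let p, q > 1 with 1/p + 1/q = 1. If f ∈ L^{p,∞}(ℝ^d) and g ∈ L^{q,∞}(ℝ^d), then fg ∈ L^{1,∞}(ℝ^d) and ‖fg‖_{1,∞} ≤ ((q/p)^{1/q} + (p/q)^{1/p}) ‖f‖_{p,∞} ‖g‖_{q,∞}. -/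
/-! If `|f x g x| > t` then `|f x| > s` or `|g x| > t / s`, so with `A`, `B` the weak norms of `f`
and `g`, `t μ{|f g| > t} ≤ t (A / s)^p + t (B s / t)^q` for every `s > 0`. The choice of `s`
minimising the right-hand side makes the two terms `(q/p)^{1/q} A B` and `(p/q)^{1/p} A B`.
If `A` or `B` vanishes, `f g = 0` almost everywhere. -/

open MeasureTheory Real
open scoped ENNReal

noncomputable section

def wnormq (q : ℝ) {α : Type*} [MeasurableSpace α] (μ : Measure α)
    {E : Type*} [Norm E] (f : α → E) : ℝ≥0∞ :=
  ⨆ t : {t : ℝ // 0 < t}, ENNReal.ofReal t.1 * (μ {x | t.1 < ‖f x‖}) ^ (1/q)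

theorem exists_mul_div_rpow_add_mul_div_rpow_eq {p q : ℝ} (hpq : p.HolderConjugate q) {t a b : ℝ}
    (ht : 0 < t) (ha : 0 < a) (hb : 0 < b) :
    ∃ s > 0, t * ((a / s) ^ p + (b * s / t) ^ q) =
      ((q / p) ^ (1 / q) + (p / q) ^ (1 / p)) * (a * b) := by
  have hp := hpq.pos
  have hq := hpq.symm.pos
  set κ := (p / q) ^ (1 / (p * q))
  set u := t / (a * b) with hu_def
  have hκ : 0 < κ := by positivity
  have hu : 0 < u := by positivity
  have hκp : κ ^ p = (p / q) ^ (1 / q) := by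
    rw [← rpow_mul (by positivity)]; congr 1; field_simp
  have hκq : κ ^ q = (p / q) ^ (1 / p) := by
    rw [← rpow_mul (by positivity)]; congr 1; field_simp
  refine ⟨a * κ * u ^ (1 / p), by positivity, ?_⟩
  have hleft : (a / (a * κ * u ^ (1 / p))) ^ p = ((p / q) ^ (1 / q))⁻¹ * u⁻¹ := by
    rw [mul_assoc, div_mul_cancel_left₀ ha.ne', inv_rpow (by positivity),
      mul_rpow hκ.le (by positivity), ← rpow_mul hu.le, one_div_mul_cancel hp.ne', rpow_one, hκp,
      mul_inv]
  have hright : (b * (a * κ * u ^ (1 / p)) / t) ^ q = (p / q) ^ (1 / p) * u⁻¹ := by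
    have : b * (a * κ * u ^ (1 / p)) / t = κ * u ^ (-q⁻¹) := by
      rw [← hpq.inv_sub_one, rpow_sub hu, rpow_one, one_div, hu_def]; field_simp
    rw [this, mul_rpow hκ.le (by positivity), ← rpow_mul hu.le, hκq, neg_mul,
      inv_mul_cancel₀ hq.ne', rpow_neg_one]
  rw [hleft, hright, ← inv_rpow (by positivity), inv_div, hu_def]
  field_simp

theorem setOf_lt_norm_mul_subset {α R : Type*} [NonUnitalSeminormedRing R] {f g : α → R}
    {t s : ℝ} (hs : 0 < s) :
    {x | t < ‖f x * g x‖} ⊆ {x | s < ‖f x‖} ∪ {x | t / s < ‖g x‖} := by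
  intro x hx
  by_contra h
  rw [Set.mem_union, not_or] at h
  have : ‖f x * g x‖ ≤ t := calc
    ‖f x * g x‖ ≤ ‖f x‖ * ‖g x‖ := norm_mul_le _ _
    _ ≤ s * (t / s) := mul_le_mul (not_lt.1 h.1) (not_lt.1 h.2) (norm_nonneg _) hs.le
    _ = t := mul_div_cancel₀ t hs.ne'
  exact this.not_gt hx

section

variable {α : Type*} [MeasurableSpace α] {μ : Measure α}

theorem ofReal_mul_measure_rpow_le_wnormq {E : Type*} [Norm E] (q : ℝ) (f : α → E) {t : ℝ}
    (ht : 0 < t) : ENNReal.ofReal t * μ {x | t < ‖f x‖} ^ (1 / q) ≤ wnormq q μ f :=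
  le_iSup (fun t : {t : ℝ // 0 < t} => ENNReal.ofReal t.1 * μ {x | t.1 < ‖f x‖} ^ (1 / q)) ⟨t, ht⟩

theorem wnormq_one_le {E : Type*} [Norm E] {f : α → E} {C : ℝ≥0∞}
    (h : ∀ t, 0 < t → ENNReal.ofReal t * μ {x | t < ‖f x‖} ≤ C) : wnormq 1 μ f ≤ C :=
  iSup_le fun t => by simpa using h t.1 t.2

theorem measure_lt_norm_le_wnormq_div_rpow {E : Type*} [Norm E] {q : ℝ} (hq : 0 < q) (f : α → E)
    {t : ℝ} (ht : 0 < t) : μ {x | t < ‖f x‖} ≤ (wnormq q μ f / ENNReal.ofReal t) ^ q := by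
  have h : μ {x | t < ‖f x‖} ^ (1 / q) ≤ wnormq q μ f / ENNReal.ofReal t := by
    rw [ENNReal.le_div_iff_mul_le (.inl (ENNReal.ofReal_pos.2 ht).ne') (.inl ENNReal.ofReal_ne_top),
      mul_comm]
    exact ofReal_mul_measure_rpow_le_wnormq q f ht
  simpa [← ENNReal.rpow_mul, hq.ne'] using ENNReal.rpow_le_rpow h hq.le

theorem measure_lt_norm_le_ofReal {E : Type*} [Norm E] {q : ℝ} (hq : 0 < q) {f : α → E}
    (hf : wnormq q μ f ≠ ⊤) {t : ℝ} (ht : 0 < t) :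
    μ {x | t < ‖f x‖} ≤ ENNReal.ofReal (((wnormq q μ f).toReal / t) ^ q) := by
  rw [← ENNReal.ofReal_rpow_of_nonneg (by positivity) hq.le, ENNReal.ofReal_div_of_pos ht,
    ENNReal.ofReal_toReal hf]
  exact measure_lt_norm_le_wnormq_div_rpow hq f ht

theorem ae_eq_zero_of_wnormq_eq_zero {E : Type*} [NormedAddCommGroup E] {q : ℝ} (hq : 0 < q)
    {f : α → E} (hf : wnormq q μ f = 0) : ∀ᵐ x ∂μ, f x = 0 := by
  have hlevel (n : ℕ) : μ {x | 1 / (n + 1 : ℝ) < ‖f x‖} = 0 := by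
    simpa [hf, ENNReal.zero_rpow_of_pos hq] using
      measure_lt_norm_le_wnormq_div_rpow (μ := μ) hq f (Nat.one_div_pos_of_nat (n := n))
  refine ae_iff.2 (measure_mono_null (fun x hx => ?_) (measure_iUnion_null hlevel))
  exact Set.mem_iUnion.2 (exists_nat_one_div_lt (norm_pos_iff.2 hx))

variable {R : Type*} [NonUnitalNormedRing R] {f g : α → R}

theorem measure_lt_norm_mul_eq_zero (hfg : ∀ᵐ x ∂μ, f x = 0 ∨ g x = 0) {t : ℝ} (ht : 0 ≤ t) :
    μ {x | t < ‖f x * g x‖} = 0 :=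
  measure_mono_null (fun x (hx : t < ‖f x * g x‖) (h0 : f x = 0 ∨ g x = 0) =>
    hx.not_ge (by rcases h0 with h | h <;> simp [h, ht])) (ae_iff.1 hfg)

theorem ofReal_mul_measure_lt_norm_mul_le {p q : ℝ} (hpq : p.HolderConjugate q)
    (hf : wnormq p μ f ≠ ⊤) (hg : wnormq q μ g ≠ ⊤) {t : ℝ} (ht : 0 < t) :
    ENNReal.ofReal t * μ {x | t < ‖f x * g x‖} ≤
      ENNReal.ofReal ((q / p) ^ (1 / q) + (p / q) ^ (1 / p)) * (wnormq p μ f * wnormq q μ g) := by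
  have hp := hpq.pos
  have hq := hpq.symm.pos
  by_cases hzero : wnormq p μ f = 0 ∨ wnormq q μ g = 0
  · have hfg : ∀ᵐ x ∂μ, f x = 0 ∨ g x = 0 := by
      rcases hzero with h | h
      · exact (ae_eq_zero_of_wnormq_eq_zero hp h).mono fun x => Or.inl
      · exact (ae_eq_zero_of_wnormq_eq_zero hq h).mono fun x => Or.inr
    simp [measure_lt_norm_mul_eq_zero hfg ht.le]
  push Not at hzero
  set a := (wnormq p μ f).toReal
  set b := (wnormq q μ g).toReal
  have ha : 0 < a := ENNReal.toReal_pos hzero.1 hf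
  have hb : 0 < b := ENNReal.toReal_pos hzero.2 hg
  obtain ⟨s, hs, hsplit⟩ := exists_mul_div_rpow_add_mul_div_rpow_eq hpq ht ha hb
  calc ENNReal.ofReal t * μ {x | t < ‖f x * g x‖}
      ≤ ENNReal.ofReal t * (μ {x | s < ‖f x‖} + μ {x | t / s < ‖g x‖}) := by
        gcongr
        exact (measure_mono (setOf_lt_norm_mul_subset hs)).trans (measure_union_le _ _)
    _ ≤ ENNReal.ofReal t * (ENNReal.ofReal ((a / s) ^ p) + ENNReal.ofReal ((b * s / t) ^ q)) := by
        rw [← div_div_eq_mul_div]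
        gcongr
        exacts [measure_lt_norm_le_ofReal hp hf hs, measure_lt_norm_le_ofReal hq hg (div_pos ht hs)]
    _ = ENNReal.ofReal (t * ((a / s) ^ p + (b * s / t) ^ q)) := by
        rw [← ENNReal.ofReal_add (by positivity) (by positivity), ENNReal.ofReal_mul ht.le]
    _ = _ := by
        rw [hsplit, ENNReal.ofReal_mul (by positivity), ENNReal.ofReal_mul ha.le,
          ENNReal.ofReal_toReal hf, ENNReal.ofReal_toReal hg]

theorem wnormq_mul_le {p q : ℝ} (hpq : p.HolderConjugate q) (hf : wnormq p μ f ≠ ⊤)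
    (hg : wnormq q μ g ≠ ⊤) :
    wnormq 1 μ (fun x => f x * g x) ≤
      ENNReal.ofReal ((q / p) ^ (1 / q) + (p / q) ^ (1 / p)) * (wnormq p μ f * wnormq q μ g) :=
  wnormq_one_le fun _ ht => ofReal_mul_measure_lt_norm_mul_le hpq hf hg ht

end

theorem weak_holder_general (d : ℕ) (p q : ℝ) (hp : 1 < p)
    (hpq : 1 / p + 1 / q = 1)
    (f g : EuclideanSpace ℝ (Fin d) → ℝ)
    (hfw : wnormq p volume f < ⊤) (hgw : wnormq q volume g < ⊤) :
    wnormq 1 volume (fun x => f x * g x) < ⊤ ∧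
    wnormq 1 volume (fun x => f x * g x) ≤
      ENNReal.ofReal ((q / p) ^ (1 / q) + (p / q) ^ (1 / p)) *
        (wnormq p volume f * wnormq q volume g) := by
  have hpq' : p.HolderConjugate q := Real.holderConjugate_iff.2 ⟨hp, by simpa using hpq⟩
  have hbound := wnormq_mul_le hpq' hfw.ne hgw.ne
  exact ⟨hbound.trans_lt (by finiteness), hbound⟩

theorem weak_holder (d : ℕ) (p q : ℝ) (hp : 1 < p) (hq : 1 < q)
    (hpq : 1 / p + 1 / q = 1)
    (f g : EuclideanSpace ℝ (Fin d) → ℝ) (hf : Measurable f) (hg : Measurable g)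
    (hfw : wnormq p volume f < ⊤) (hgw : wnormq q volume g < ⊤) :
    wnormq 1 volume (fun x => f x * g x) < ⊤ ∧
    wnormq 1 volume (fun x => f x * g x) ≤
      ENNReal.ofReal ((q / p) ^ (1 / q) + (p / q) ^ (1 / p)) *
        (wnormq p volume f * wnormq q volume g) :=
  weak_holder_general d p q hp hpq f g hfw hgw

end
end
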